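/- Let 𝔤 be a 3-dimensional real Lie algebra and (e, Θ) a left-invariant parallel Cauchy pair with Θ_{ul}·Θ_{un} ≠ 0, satisfying Θ_{ll} = (Θ_{ul}/Θ_{un})·Θ_{ln}, Θ_{nn} = (Θ_{un}/Θ_{ul})·Θ_{ln} and Θ_{ln} = −(Θ_{ul}Θ_{un}/(Θ_{ul}² + Θ_{un}²))·Θ_{uu} (so that T := Θ_{ll} + Θ_{nn} = −Θ_{uu}). Let λ : ℝ → ℝ be smooth and nowhere zero, B_t := ∫₀^t λ_τ dτ, λ := √(Θ_{ul}² + Θ_{un}²), y_t := λ·B_t + arctan(Θ_{uu}/λ), and let I be an interval containing 0 on which cos(y_t) ≠ 0. Define on I: e^t_u := e_u + B_t·(T·e_u − Θ_{ul}·e_l − Θ_{un}·e_n); e^t_l := −(Θ_{ul}/λ)·(T/λ + (1 + T B_t)·tan(y_t))·e_u + (1 + (Θ_{ul}² B_t/λ)·tan(y_t))·e_l + (Θ_{ul}Θ_{un} B_t/λ)·tan(y_t)·e_n; e^t_n := −(Θ_{un}/λ)·(T/λ + (1 + T B_t)·tan(y_t))·e_u + (Θ_{ul}Θ_{un} B_t/λ)·tan(y_t)·e_l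 + (1 + (Θ_{un}² B_t/λ)·tan(y_t))·e_n; and the symmetric family Θ^t with Θ^t_{uu} := λ·tan(y_t), Θ^t_{ul} := Θ_{ul}, Θ^t_{un} := Θ_{un}, Θ^t_{ll} := −(Θ_{ul}²/λ)·tan(y_t), Θ^t_{nn} := −(Θ_{un}²/λ)·tan(y_t), Θ^t_{ln} := −(Θ_{ul}Θ_{un}/λ)·tan(y_t). Then {λ_t, e^t, Θ^t} satisfies the left-invariant parallel spinor flow equations (F1)–(F4) on I with e⁰ = e. -/

import Mathlib

noncomputable section

variable {𝔤 : Type*} [LieRing 𝔤] [LieAlgebra ℝ 𝔤]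

/-- A global left-invariant coframe: a triple of covectors forming a basis of `𝔤*`. -/
def IsCoframe (e : Fin 3 → Module.Dual ℝ 𝔤) : Prop :=
  LinearIndependent ℝ e ∧ Submodule.span ℝ (Set.range e) = ⊤

/-- Equation (F1) of the left-invariant parallel spinor flow at time `t`:
`∂ₜ e^t_a(X) + λ_t Σ_b Θ^t_{ab} e^t_b(X) = 0`. -/
def F1At (lam : ℝ → ℝ) (Θ : ℝ → Matrix (Fin 3) (Fin 3) ℝ)
    (e : ℝ → Fin 3 → Module.Dual ℝ 𝔤) (t : ℝ) : Prop :=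
  ∀ (a : Fin 3) (X : 𝔤),
    HasDerivAt (fun s => e s a X) (-(lam t * ∑ b, Θ t a b * e t b X)) t

/-- Equation (F2) of the left-invariant parallel spinor flow at time `t`:
`−e^t_a([X,Y]) = Σ_b Θ^t_{ab} (e^t_b(X) e^t_u(Y) − e^t_b(Y) e^t_u(X))`. -/
def F2At (Θ : ℝ → Matrix (Fin 3) (Fin 3) ℝ)
    (e : ℝ → Fin 3 → Module.Dual ℝ 𝔤) (t : ℝ) : Prop :=
  ∀ (a : Fin 3) (X Y : 𝔤),
    -(e t a ⁅X, Y⁆) = ∑ b, Θ t a b * (e t b X * e t 0 Y - e t b Y * e t 0 X)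

/-- Equation (F3) of the left-invariant parallel spinor flow at time `t`:
`∂ₜ (Σ_a Θ^t_{ua} e^t_a(X)) = 0`. -/
def F3At (Θ : ℝ → Matrix (Fin 3) (Fin 3) ℝ)
    (e : ℝ → Fin 3 → Module.Dual ℝ 𝔤) (t : ℝ) : Prop :=
  ∀ X : 𝔤, HasDerivAt (fun s => ∑ a, Θ s 0 a * e s a X) 0 t

/-- Equation (F4) of the left-invariant parallel spinor flow at time `t`:
`Σ_a Θ^t_{ua} e^t_a([X,Y]) = 0`. -/
def F4At (Θ : ℝ → Matrix (Fin 3) (Fin 3) ℝ)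
    (e : ℝ → Fin 3 → Module.Dual ℝ 𝔤) (t : ℝ) : Prop :=
  ∀ X Y : 𝔤, ∑ a, Θ t 0 a * e t a ⁅X, Y⁆ = 0

/-- The integrability conditions of the left-invariant parallel spinor flow for the
pair `(λ_t, Θ^t_{ab})` at time `t` (indices `u,l,n` are `0,1,2`). -/
def IntegrabilityAt (lam : ℝ → ℝ) (Θ : ℝ → Matrix (Fin 3) (Fin 3) ℝ) (t : ℝ) : Prop :=
  deriv (fun s => Θ s 0 0) t
      = lam t * ((Θ t 0 0) ^ 2 + (Θ t 0 1) ^ 2 + (Θ t 0 2) ^ 2) ∧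
  deriv (fun s => Θ s 0 1) t = 0 ∧
  deriv (fun s => Θ s 0 2) t = 0 ∧
  deriv (fun s => Θ s 1 1) t = lam t * (Θ t 1 1 * Θ t 0 0 - (Θ t 0 1) ^ 2) ∧
  deriv (fun s => Θ s 1 2) t = lam t * (Θ t 1 2 * Θ t 0 0 - Θ t 0 2 * Θ t 0 1) ∧
  deriv (fun s => Θ s 2 2) t = lam t * (Θ t 2 2 * Θ t 0 0 - (Θ t 0 2) ^ 2) ∧
  Θ t 1 2 * Θ t 0 1 = Θ t 1 1 * Θ t 0 2 ∧
  Θ t 1 2 * Θ t 0 2 = Θ t 2 2 * Θ t 0 1 ∧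
  Θ t 1 1 * Θ t 0 1 + Θ t 1 2 * Θ t 0 2 + Θ t 0 1 * Θ t 0 0 = 0 ∧
  Θ t 1 2 * Θ t 0 1 + Θ t 2 2 * Θ t 0 2 + Θ t 0 2 * Θ t 0 0 = 0

/-- A left-invariant parallel Cauchy pair: a coframe `e` of `𝔤*` together with a symmetric
matrix `Θ` satisfying the constraint `−e_a([X,Y]) = Σ_b Θ_{ab}(e_b(X)e_u(Y) − e_b(Y)e_u(X))`. -/
def IsCauchyPair (e : Fin 3 → Module.Dual ℝ 𝔤) (Θ : Matrix (Fin 3) (Fin 3) ℝ) : Prop :=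
  IsCoframe e ∧ Θ.IsSymm ∧
  ∀ (a : Fin 3) (X Y : 𝔤),
    -(e a ⁅X, Y⁆) = ∑ b, Θ a b * (e b X * e 0 Y - e b Y * e 0 X)

/-- `B_t = ∫₀ᵗ λ_τ dτ`. -/
def Bfun (lam : ℝ → ℝ) (t : ℝ) : ℝ := ∫ τ in (0:ℝ)..t, lam τ

/-!
Put `p = Θ_{ul}`, `q = Θ_{un}`, `d = Θ_{uu}/(p² + q²)` and `ω = Σ_b Θ_{ub} e_b`. The hypotheses say
that `Θ = genericShape p q d`, and with `c_t = tan(y_t)/μ` the proposed family is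
`Θ^t = genericShape p q c_t` together with the coframe `e^t_u = e_u − B_t ω`,
`e^t_a = e_a + Θ_{ua} (d e_u − c_t e^t_u)` for `a = l, n`.

Along this family `Σ_a Θ^t_{ua} e^t_a = ω` identically, and `ω` vanishes on brackets by the
structure equations of `e`; this gives (F3) and (F4). The structure equations (F2) for `e^t` hold
for all values of `B_t` and `c_t`. Only (F1) sees the time dependence: it needs `B' = λ` and the
Riccati equation `c' = λ (1 + μ² c²)`, which `tan(y_t)/μ` solves because `y' = μ λ`.
-/

def CauchyConstraint (e : Fin 3 → Module.Dual ℝ 𝔤) (Θ : Matrix (Fin 3) (Fin 3) ℝ) : Prop :=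
  ∀ (a : Fin 3) (X Y : 𝔤), -(e a ⁅X, Y⁆) = ∑ b, Θ a b * (e b X * e 0 Y - e b Y * e 0 X)

def genericShape (p q d : ℝ) : Matrix (Fin 3) (Fin 3) ℝ :=
  !![(p ^ 2 + q ^ 2) * d, p, q;
     p, -(p ^ 2 * d), -(p * q * d);
     q, -(p * q * d), -(q ^ 2 * d)]

def conservedForm (p q d : ℝ) (e : Fin 3 → Module.Dual ℝ 𝔤) : Module.Dual ℝ 𝔤 :=
  ((p ^ 2 + q ^ 2) * d) • e 0 + p • e 1 + q • e 2

def flowFrame (p q d : ℝ) (e : Fin 3 → Module.Dual ℝ 𝔤) (B c : ℝ) :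
    Fin 3 → Module.Dual ℝ 𝔤 :=
  ![e 0 - B • conservedForm p q d e,
    e 1 + p • (d • e 0 - c • (e 0 - B • conservedForm p q d e)),
    e 2 + q • (d • e 0 - c • (e 0 - B • conservedForm p q d e))]

section GenericFlow

variable {e : Fin 3 → Module.Dual ℝ 𝔤} {p q d : ℝ}

theorem flowFrame_zero_self : flowFrame p q d e 0 d = e := by
  ext a X
  fin_cases a <;> simp [flowFrame]

theorem sum_genericShape_mul_flowFrame (B c : ℝ) (X : 𝔤) :
    ∑ a, genericShape p q c 0 a * flowFrame p q d e B c a X = conservedForm p q d e X := by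
  simp only [genericShape, flowFrame, conservedForm, Fin.sum_univ_three, Fin.isValue,
    Matrix.of_apply, Matrix.cons_val', Matrix.cons_val_zero, Matrix.cons_val_one, Matrix.cons_val,
    Matrix.cons_val_fin_one, LinearMap.add_apply, LinearMap.sub_apply, LinearMap.smul_apply,
    smul_eq_mul]
  ring

theorem CauchyConstraint.conservedForm_lie (h : CauchyConstraint e (genericShape p q d))
    (X Y : 𝔤) : conservedForm p q d e ⁅X, Y⁆ = 0 := by
  have h0 := h 0 X Y
  have h1 := h 1 X Y
  have h2 := h 2 X Y
  simp only [genericShape, Fin.sum_univ_three, Fin.isValue, Matrix.of_apply, Matrix.cons_val',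
    Matrix.cons_val_zero, Matrix.cons_val_one, Matrix.cons_val, Matrix.cons_val_fin_one] at h0 h1 h2
  simp only [conservedForm, LinearMap.add_apply, LinearMap.smul_apply, smul_eq_mul]
  -- `ω = Σ_b Θ_{ub} e_b` and `(Θ²)_{ul} = (Θ²)_{un} = 0`
  linear_combination (-(p ^ 2 + q ^ 2) * d) * h0 - p * h1 - q * h2

theorem CauchyConstraint.flowFrame_genericShape (h : CauchyConstraint e (genericShape p q d))
    (B c : ℝ) : CauchyConstraint (flowFrame p q d e B c) (genericShape p q c) := by
  intro a X Y
  have h0 := h 0 X Y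
  have h1 := h 1 X Y
  have h2 := h 2 X Y
  simp only [genericShape, Fin.sum_univ_three, Fin.isValue, Matrix.of_apply, Matrix.cons_val',
    Matrix.cons_val_zero, Matrix.cons_val_one, Matrix.cons_val, Matrix.cons_val_fin_one] at h0 h1 h2
  fin_cases a <;>
    simp only [genericShape, flowFrame, conservedForm, Fin.sum_univ_three, Fin.isValue,
      Fin.zero_eta, Fin.mk_one, Fin.reduceFinMk, Matrix.of_apply, Matrix.cons_val',
      Matrix.cons_val_zero, Matrix.cons_val_one, Matrix.cons_val, Matrix.cons_val_fin_one,
      LinearMap.add_apply, LinearMap.sub_apply, LinearMap.smul_apply, smul_eq_mul]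
  -- the coefficient of `h b` is the coefficient of `e b` in `flowFrame p q d e B c a`
  · linear_combination (1 - B * (p ^ 2 + q ^ 2) * d) * h0 - B * p * h1 - B * q * h2
  · linear_combination (p * d - p * c * (1 - B * (p ^ 2 + q ^ 2) * d)) * h0
      + (1 + p * c * B * p) * h1 + p * c * B * q * h2
  · linear_combination (q * d - q * c * (1 - B * (p ^ 2 + q ^ 2) * d)) * h0
      + q * c * B * p * h1 + (1 + q * c * B * q) * h2

theorem hasDerivAt_flowFrame_apply {B c : ℝ → ℝ} {l t : ℝ} (hB : HasDerivAt B l t)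
    (hc : HasDerivAt c (l * (1 + (p ^ 2 + q ^ 2) * c t ^ 2)) t) (a : Fin 3) (X : 𝔤) :
    HasDerivAt (fun s => flowFrame p q d e (B s) (c s) a X)
      (-(l * ∑ b, genericShape p q (c t) a b * flowFrame p q d e (B t) (c t) b X)) t := by
  set ω := conservedForm p q d e X
  have h0 : HasDerivAt (fun s => flowFrame p q d e (B s) (c s) 0 X) (-(l * ω)) t := by
    simpa [flowFrame] using (hB.mul_const ω).const_sub (e 0 X)
  have h1 : HasDerivAt (fun s => flowFrame p q d e (B s) (c s) 1 X)
      (p * -(l * (1 + (p ^ 2 + q ^ 2) * c t ^ 2) * flowFrame p q d e (B t) (c t) 0 X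
        + c t * -(l * ω))) t :=
    (((hc.mul h0).const_sub (d * e 0 X)).const_mul p).const_add (e 1 X)
  have h2 : HasDerivAt (fun s => flowFrame p q d e (B s) (c s) 2 X)
      (q * -(l * (1 + (p ^ 2 + q ^ 2) * c t ^ 2) * flowFrame p q d e (B t) (c t) 0 X
        + c t * -(l * ω))) t :=
    (((hc.mul h0).const_sub (d * e 0 X)).const_mul q).const_add (e 2 X)
  fin_cases a
  · simpa [sum_genericShape_mul_flowFrame] using h0
  · refine h1.congr_deriv ?_
    simp only [genericShape, flowFrame, conservedForm, Fin.sum_univ_three, Fin.isValue, Fin.mk_one,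
      Matrix.of_apply, Matrix.cons_val', Matrix.cons_val_zero, Matrix.cons_val_one, Matrix.cons_val,
      Matrix.cons_val_fin_one, LinearMap.add_apply, LinearMap.sub_apply, LinearMap.smul_apply,
      smul_eq_mul, ω]
    ring
  · refine h2.congr_deriv ?_
    simp only [genericShape, flowFrame, conservedForm, Fin.sum_univ_three, Fin.isValue,
      Fin.reduceFinMk, Matrix.of_apply, Matrix.cons_val', Matrix.cons_val_zero, Matrix.cons_val_one,
      Matrix.cons_val, Matrix.cons_val_fin_one, LinearMap.add_apply, LinearMap.sub_apply,
      LinearMap.smul_apply, smul_eq_mul, ω]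
    ring

theorem CauchyConstraint.parallelSpinorFlowAt (h : CauchyConstraint e (genericShape p q d))
    {lam B c : ℝ → ℝ} {t : ℝ} (hB : HasDerivAt B (lam t) t)
    (hc : HasDerivAt c (lam t * (1 + (p ^ 2 + q ^ 2) * c t ^ 2)) t) :
    F1At lam (fun s => genericShape p q (c s)) (fun s => flowFrame p q d e (B s) (c s)) t ∧
      F2At (fun s => genericShape p q (c s)) (fun s => flowFrame p q d e (B s) (c s)) t ∧
      F3At (fun s => genericShape p q (c s)) (fun s => flowFrame p q d e (B s) (c s)) t ∧
      F4At (fun s => genericShape p q (c s)) (fun s => flowFrame p q d e (B s) (c s)) t := by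
  refine ⟨hasDerivAt_flowFrame_apply hB hc, h.flowFrame_genericShape (B t) (c t),
    fun X => ?_, fun X Y => ?_⟩
  · simp only [sum_genericShape_mul_flowFrame]
    exact hasDerivAt_const t _
  · rw [sum_genericShape_mul_flowFrame]
    exact h.conservedForm_lie X Y

theorem flowFrame_div {T μ : ℝ} (hμ : μ ≠ 0) (hμ2 : μ ^ 2 = p ^ 2 + q ^ 2)
    (hT : T = -((p ^ 2 + q ^ 2) * d)) (B τ : ℝ) :
    flowFrame p q d e B (τ / μ) =
      ![e 0 + B • (T • e 0 - p • e 1 - q • e 2),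
        (-(p / μ) * (T / μ + (1 + T * B) * τ)) • e 0 + (1 + p ^ 2 * B / μ * τ) • e 1
          + (p * q * B / μ * τ) • e 2,
        (-(q / μ) * (T / μ + (1 + T * B) * τ)) • e 0 + (p * q * B / μ * τ) • e 1
          + (1 + q ^ 2 * B / μ * τ) • e 2] := by
  ext a X
  fin_cases a <;>
    simp only [flowFrame, conservedForm, hT, ← hμ2, Fin.zero_eta, Fin.isValue, Fin.mk_one,
      Fin.reduceFinMk, Matrix.cons_val_zero, Matrix.cons_val_one, Matrix.cons_val,
      LinearMap.add_apply, LinearMap.sub_apply, LinearMap.smul_apply, smul_eq_mul] <;>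
    field_simp <;> ring

end GenericFlow

theorem eq_genericShape {Θ : Matrix (Fin 3) (Fin 3) ℝ} (hsymm : Θ.IsSymm)
    (hgen : Θ 0 1 * Θ 0 2 ≠ 0)
    (hll : Θ 1 1 = Θ 0 1 / Θ 0 2 * Θ 1 2)
    (hnn : Θ 2 2 = Θ 0 2 / Θ 0 1 * Θ 1 2)
    (hln : Θ 1 2 = -(Θ 0 1 * Θ 0 2 / (Θ 0 1 ^ 2 + Θ 0 2 ^ 2)) * Θ 0 0) :
    Θ = genericShape (Θ 0 1) (Θ 0 2) (Θ 0 0 / (Θ 0 1 ^ 2 + Θ 0 2 ^ 2)) := by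
  have hp : Θ 0 1 ≠ 0 := left_ne_zero_of_mul hgen
  have hq : Θ 0 2 ≠ 0 := right_ne_zero_of_mul hgen
  have hK : Θ 0 1 ^ 2 + Θ 0 2 ^ 2 ≠ 0 := by positivity
  ext i j
  fin_cases i <;> fin_cases j <;>
    simp only [genericShape, Fin.zero_eta, Fin.isValue, Fin.mk_one, Fin.reduceFinMk,
      Matrix.of_apply, Matrix.cons_val', Matrix.cons_val_zero, Matrix.cons_val_one, Matrix.cons_val,
      Matrix.cons_val_fin_one, hsymm.apply 0 1, hsymm.apply 0 2, hsymm.apply 1 2, hll, hnn, hln,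
      neg_mul, mul_neg, neg_inj] <;>
    field_simp

theorem genericShape_div {p q μ : ℝ} (hμ : μ ≠ 0) (hμ2 : μ ^ 2 = p ^ 2 + q ^ 2) (τ : ℝ) :
    genericShape p q (τ / μ) =
      !![μ * τ, p, q;
         p, -(p ^ 2 / μ * τ), -(p * q / μ * τ);
         q, -(p * q / μ * τ), -(q ^ 2 / μ * τ)] := by
  ext i j
  fin_cases i <;> fin_cases j <;>
    simp only [genericShape, ← hμ2, Fin.zero_eta, Fin.isValue, Fin.mk_one, Fin.reduceFinMk,
      Matrix.of_apply, Matrix.cons_val', Matrix.cons_val_zero, Matrix.cons_val_one, Matrix.cons_val,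
      Matrix.cons_val_fin_one, neg_inj] <;>
    field_simp

theorem hasDerivAt_Bfun {lam : ℝ → ℝ} (hlam : Continuous lam) (t : ℝ) :
    HasDerivAt (Bfun lam) (lam t) t :=
  intervalIntegral.integral_hasDerivAt_right (hlam.intervalIntegrable _ _)
    (hlam.stronglyMeasurableAtFilter _ _) hlam.continuousAt

theorem Bfun_zero (lam : ℝ → ℝ) : Bfun lam 0 = 0 :=
  intervalIntegral.integral_same

theorem hasDerivAt_tan_div {y : ℝ → ℝ} {μ l t : ℝ} (hy : HasDerivAt y (μ * l) t)
    (hcos : Real.cos (y t) ≠ 0) (hμ : μ ≠ 0) :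
    HasDerivAt (fun s => Real.tan (y s) / μ) (l * (1 + μ ^ 2 * (Real.tan (y t) / μ) ^ 2)) t := by
  refine (((Real.hasDerivAt_tan hcos).comp t hy).div_const μ).congr_deriv ?_
  rw [← Real.inv_one_add_tan_sq hcos]
  field_simp

theorem generic_parallel_spinor_flow_general
    {𝔤 : Type*} [LieRing 𝔤] [LieAlgebra ℝ 𝔤]
    (e : Fin 3 → Module.Dual ℝ 𝔤) (Θ : Matrix (Fin 3) (Fin 3) ℝ)
    (hCauchy : IsCauchyPair e Θ)
    (hgen : Θ 0 1 * Θ 0 2 ≠ 0)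
    (hll : Θ 1 1 = Θ 0 1 / Θ 0 2 * Θ 1 2)
    (hnn : Θ 2 2 = Θ 0 2 / Θ 0 1 * Θ 1 2)
    (hln : Θ 1 2 = -(Θ 0 1 * Θ 0 2 / (Θ 0 1 ^ 2 + Θ 0 2 ^ 2)) * Θ 0 0)
    (T : ℝ) (hT : T = Θ 1 1 + Θ 2 2)
    (lam : ℝ → ℝ) (hlam : ContDiff ℝ (⊤ : ℕ∞) lam)
    (μ : ℝ) (hμdef : μ = Real.sqrt (Θ 0 1 ^ 2 + Θ 0 2 ^ 2))
    (y : ℝ → ℝ) (hy : ∀ t, y t = μ * Bfun lam t + Real.arctan (Θ 0 0 / μ))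
    (I : Set ℝ)
    (hcos : ∀ t ∈ I, Real.cos (y t) ≠ 0)
    (eT : ℝ → Fin 3 → Module.Dual ℝ 𝔤)
    (heT0 : ∀ t, eT t 0 = e 0 + Bfun lam t • (T • e 0 - Θ 0 1 • e 1 - Θ 0 2 • e 2))
    (heT1 : ∀ t, eT t 1 =
      (-(Θ 0 1 / μ) * (T / μ + (1 + T * Bfun lam t) * Real.tan (y t))) • e 0
      + (1 + Θ 0 1 ^ 2 * Bfun lam t / μ * Real.tan (y t)) • e 1
      + (Θ 0 1 * Θ 0 2 * Bfun lam t / μ * Real.tan (y t)) • e 2)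
    (heT2 : ∀ t, eT t 2 =
      (-(Θ 0 2 / μ) * (T / μ + (1 + T * Bfun lam t) * Real.tan (y t))) • e 0
      + (Θ 0 1 * Θ 0 2 * Bfun lam t / μ * Real.tan (y t)) • e 1
      + (1 + Θ 0 2 ^ 2 * Bfun lam t / μ * Real.tan (y t)) • e 2)
    (Θfam : ℝ → Matrix (Fin 3) (Fin 3) ℝ)
    (hΘfam : ∀ t, Θfam t =
      !![μ * Real.tan (y t), Θ 0 1, Θ 0 2;
         Θ 0 1, -(Θ 0 1 ^ 2 / μ * Real.tan (y t)), -(Θ 0 1 * Θ 0 2 / μ * Real.tan (y t));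
         Θ 0 2, -(Θ 0 1 * Θ 0 2 / μ * Real.tan (y t)), -(Θ 0 2 ^ 2 / μ * Real.tan (y t))]) :
    (∀ t ∈ I, F1At lam Θfam eT t ∧ F2At Θfam eT t ∧ F3At Θfam eT t ∧ F4At Θfam eT t) ∧
    eT 0 = e := by
  obtain ⟨-, hsymm, hconstr⟩ := hCauchy
  have hK : 0 < Θ 0 1 ^ 2 + Θ 0 2 ^ 2 := by have := left_ne_zero_of_mul hgen; positivity
  have hμ : μ ≠ 0 := hμdef ▸ (Real.sqrt_pos.2 hK).ne'
  have hμ2 : μ ^ 2 = Θ 0 1 ^ 2 + Θ 0 2 ^ 2 := hμdef ▸ Real.sq_sqrt hK.le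
  set d := Θ 0 0 / (Θ 0 1 ^ 2 + Θ 0 2 ^ 2) with hd
  have hΘ := eq_genericShape hsymm hgen hll hnn hln
  have hconstr' : CauchyConstraint e (genericShape (Θ 0 1) (Θ 0 2) d) := hΘ ▸ hconstr
  have hTd : T = -((Θ 0 1 ^ 2 + Θ 0 2 ^ 2) * d) := by
    rw [hT, hΘ]
    simp only [genericShape, Fin.isValue, Matrix.of_apply, Matrix.cons_val', Matrix.cons_val_one,
      Matrix.cons_val_zero, Matrix.cons_val_fin_one, Matrix.cons_val]
    ring
  set c : ℝ → ℝ := fun s => Real.tan (y s) / μ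
  obtain rfl : Θfam = fun s => genericShape (Θ 0 1) (Θ 0 2) (c s) :=
    funext fun s => by rw [hΘfam, genericShape_div hμ hμ2]
  obtain rfl : eT = fun s => flowFrame (Θ 0 1) (Θ 0 2) d e (Bfun lam s) (c s) := by
    funext s a
    rw [flowFrame_div hμ hμ2 hTd]
    fin_cases a <;> simp [heT0, heT1, heT2]
  obtain rfl : y = fun s => μ * Bfun lam s + Real.arctan (Θ 0 0 / μ) := funext hy
  have hB := hasDerivAt_Bfun hlam.continuous
  have hc0 : c 0 = d := by
    simp only [c, Bfun_zero, mul_zero, zero_add, Real.tan_arctan, hd, ← hμ2]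
    field_simp
  refine ⟨fun t ht => hconstr'.parallelSpinorFlowAt (hB t) ?_, ?_⟩
  · rw [← hμ2]
    exact hasDerivAt_tan_div (((hB t).const_mul μ).add_const _) (hcos t ht) hμ
  · simp only [Bfun_zero, hc0, flowFrame_zero_self]

/-- Classification of left-invariant parallel spinor flows with `Θ_{ul}Θ_{un} ≠ 0`: the
explicit trigonometric family of coframes and shape operators is a left-invariant parallel
spinor flow with initial coframe `e`. -/
theorem generic_parallel_spinor_flow
    {𝔤 : Type*} [LieRing 𝔤] [LieAlgebra ℝ 𝔤]
    (hdim : Module.finrank ℝ 𝔤 = 3)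
    (e : Fin 3 → Module.Dual ℝ 𝔤) (Θ : Matrix (Fin 3) (Fin 3) ℝ)
    (hCauchy : IsCauchyPair e Θ)
    (hgen : Θ 0 1 * Θ 0 2 ≠ 0)
    (hll : Θ 1 1 = Θ 0 1 / Θ 0 2 * Θ 1 2)
    (hnn : Θ 2 2 = Θ 0 2 / Θ 0 1 * Θ 1 2)
    (hln : Θ 1 2 = -(Θ 0 1 * Θ 0 2 / (Θ 0 1 ^ 2 + Θ 0 2 ^ 2)) * Θ 0 0)
    (T : ℝ) (hT : T = Θ 1 1 + Θ 2 2)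
    (lam : ℝ → ℝ) (hlam : ContDiff ℝ (⊤ : ℕ∞) lam) (hlam0 : ∀ t, lam t ≠ 0)
    (μ : ℝ) (hμdef : μ = Real.sqrt (Θ 0 1 ^ 2 + Θ 0 2 ^ 2))
    (y : ℝ → ℝ) (hy : ∀ t, y t = μ * Bfun lam t + Real.arctan (Θ 0 0 / μ))
    (I : Set ℝ) (h0I : (0:ℝ) ∈ I) (hI : I.OrdConnected)
    (hcos : ∀ t ∈ I, Real.cos (y t) ≠ 0)
    (eT : ℝ → Fin 3 → Module.Dual ℝ 𝔤)
    (heT0 : ∀ t, eT t 0 = e 0 + Bfun lam t • (T • e 0 - Θ 0 1 • e 1 - Θ 0 2 • e 2))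
    (heT1 : ∀ t, eT t 1 =
      (-(Θ 0 1 / μ) * (T / μ + (1 + T * Bfun lam t) * Real.tan (y t))) • e 0
      + (1 + Θ 0 1 ^ 2 * Bfun lam t / μ * Real.tan (y t)) • e 1
      + (Θ 0 1 * Θ 0 2 * Bfun lam t / μ * Real.tan (y t)) • e 2)
    (heT2 : ∀ t, eT t 2 =
      (-(Θ 0 2 / μ) * (T / μ + (1 + T * Bfun lam t) * Real.tan (y t))) • e 0
      + (Θ 0 1 * Θ 0 2 * Bfun lam t / μ * Real.tan (y t)) • e 1
      + (1 + Θ 0 2 ^ 2 * Bfun lam t / μ * Real.tan (y t)) • e 2)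
    (Θfam : ℝ → Matrix (Fin 3) (Fin 3) ℝ)
    (hΘfam : ∀ t, Θfam t =
      !![μ * Real.tan (y t), Θ 0 1, Θ 0 2;
         Θ 0 1, -(Θ 0 1 ^ 2 / μ * Real.tan (y t)), -(Θ 0 1 * Θ 0 2 / μ * Real.tan (y t));
         Θ 0 2, -(Θ 0 1 * Θ 0 2 / μ * Real.tan (y t)), -(Θ 0 2 ^ 2 / μ * Real.tan (y t))]) :
    (∀ t ∈ I, F1At lam Θfam eT t ∧ F2At Θfam eT t ∧ F3At Θfam eT t ∧ F4At Θfam eT t) ∧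
    eT 0 = e :=
  generic_parallel_spinor_flow_general e Θ hCauchy hgen hll hnn hln T hT lam hlam μ hμdef y hy I
    hcos eT heT0 heT1 heT2 Θfam hΘfam
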